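/- (The quadratic form q* is annihilated by h and e₊.) Let n ≥ 1, define p_k := e₋^k((x₁ + i·x₂)^n) for k = 0,…,2n, and set q* := Σ_{k=0}^{2n} (−1)^(n+k) · p_k · p_{2n−k} ∈ ℂ[x₁,x₂,x₃]. Then h q* = 0 and e₊ q* = 0. -/
import Mathlib


open MvPolynomial

/-- Directional derivative along `f₀ = (x₂, −x₁, 0)`. -/
noncomputable def D0 : Module.End ℂ (MvPolynomial (Fin 3) ℂ) :=
  (LinearMap.mulLeft ℂ (X 1 : MvPolynomial (Fin 3) ℂ)).comp (pderiv 0).toLinearMap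
    - (LinearMap.mulLeft ℂ (X 0 : MvPolynomial (Fin 3) ℂ)).comp (pderiv 1).toLinearMap

/-- Directional derivative along `f₁ = (x₃, 0, −x₁)`. -/
noncomputable def D1 : Module.End ℂ (MvPolynomial (Fin 3) ℂ) :=
  (LinearMap.mulLeft ℂ (X 2 : MvPolynomial (Fin 3) ℂ)).comp (pderiv 0).toLinearMap
    - (LinearMap.mulLeft ℂ (X 0 : MvPolynomial (Fin 3) ℂ)).comp (pderiv 2).toLinearMap

/-- Directional derivative along `f₂ = (0, x₃, −x₂)`. -/
noncomputable def D2 : Module.End ℂ (MvPolynomial (Fin 3) ℂ) :=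
  (LinearMap.mulLeft ℂ (X 2 : MvPolynomial (Fin 3) ℂ)).comp (pderiv 1).toLinearMap
    - (LinearMap.mulLeft ℂ (X 1 : MvPolynomial (Fin 3) ℂ)).comp (pderiv 2).toLinearMap

/-- The Cartan element `h := 2i·D₀`. -/
noncomputable def hOp : Module.End ℂ (MvPolynomial (Fin 3) ℂ) := (2 * Complex.I) • D0

/-- The raising operator `e₊ := D₁ + i·D₂`. -/
noncomputable def ePlus : Module.End ℂ (MvPolynomial (Fin 3) ℂ) := D1 + Complex.I • D2

/-- The lowering operator `e₋ := −D₁ + i·D₂`. -/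
noncomputable def eMinus : Module.End ℂ (MvPolynomial (Fin 3) ℂ) := -D1 + Complex.I • D2


/-- The weight vectors `p_k := e₋^k ((x₁ + i·x₂)^n)`. -/
noncomputable def pvec (n k : ℕ) : MvPolynomial (Fin 3) ℂ :=
  (eMinus ^ k) ((X 0 + Complex.I • X 1) ^ n)

/- ### Auxiliary development -/

lemma pdlm (i : Fin 3) (p : MvPolynomial (Fin 3) ℂ) :
    (pderiv i).toLinearMap p = pderiv i p := rfl

/-- Leibniz property for an endomorphism. -/
def Leib (A : Module.End ℂ (MvPolynomial (Fin 3) ℂ)) : Prop :=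
  ∀ p q : MvPolynomial (Fin 3) ℂ, A (p * q) = A p * q + p * A q

lemma leib_D0 : Leib D0 := by
  intro p q
  simp only [D0, LinearMap.sub_apply, LinearMap.comp_apply, LinearMap.mulLeft_apply,
    pdlm, pderiv_mul]
  ring

lemma leib_D1 : Leib D1 := by
  intro p q
  simp only [D1, LinearMap.sub_apply, LinearMap.comp_apply, LinearMap.mulLeft_apply,
    pdlm, pderiv_mul]
  ring

lemma leib_D2 : Leib D2 := by
  intro p q
  simp only [D2, LinearMap.sub_apply, LinearMap.comp_apply, LinearMap.mulLeft_apply,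
    pdlm, pderiv_mul]
  ring

lemma Leib.smul {A} (hA : Leib A) (c : ℂ) : Leib (c • A) := by
  intro p q
  simp only [LinearMap.smul_apply, hA p q, smul_add, smul_mul_assoc, mul_smul_comm]

lemma Leib.add {A B} (hA : Leib A) (hB : Leib B) : Leib (A + B) := by
  intro p q
  simp only [LinearMap.add_apply, hA p q, hB p q]
  ring

lemma Leib.neg {A} (hA : Leib A) : Leib (-A) := by
  intro p q
  simp only [LinearMap.neg_apply, hA p q]
  ring

lemma leib_hOp : Leib hOp := leib_D0.smul _
lemma leib_ePlus : Leib ePlus := leib_D1.add (leib_D2.smul _)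
lemma leib_eMinus : Leib eMinus := leib_D1.neg.add (leib_D2.smul _)

lemma Leib.one_eq_zero {A} (hA : Leib A) : A 1 = 0 := by
  have := hA 1 1
  simp only [mul_one, one_mul] at this
  have h2 : A 1 - A 1 = A 1 + A 1 - A 1 := by rw [← this]
  simpa using h2.symm

lemma Leib.mulcomm {A B} (hA : Leib A) (hB : Leib B) : Leib (A * B - B * A) := by
  intro p q
  simp only [LinearMap.sub_apply, Module.End.mul_apply]
  rw [hB p q, map_add, hA (B p) q, hA p (B q), hA p q, map_add, hB (A p) q, hB p (A q)]
  ring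

lemma leib_ext {A B} (hA : Leib A) (hB : Leib B) (h : ∀ i, A (X i) = B (X i)) : A = B := by
  apply LinearMap.ext; intro p
  induction p using MvPolynomial.induction_on with
  | C a =>
    have hca : (C a : MvPolynomial (Fin 3) ℂ) = a • 1 := by
      rw [smul_eq_C_mul, mul_one]
    rw [hca, map_smul, map_smul, hA.one_eq_zero, hB.one_eq_zero]
  | add p q hp hq => rw [map_add, map_add, hp, hq]
  | mul_X p i hp => rw [hA, hB, hp, h i]

lemma rel1 : hOp * eMinus - eMinus * hOp = (-2 : ℂ) • eMinus := by
  apply leib_ext (leib_hOp.mulcomm leib_eMinus) (leib_eMinus.smul _)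
  intro i
  fin_cases i <;>
    simp [hOp, ePlus, eMinus, D0, D1, D2, pdlm, smul_smul, Complex.I_mul_I, pderiv_mul, smul_sub,
      mul_sub, sub_mul, smul_add] <;>
    (match_scalars <;> ring_nf <;> simp [Complex.I_sq])

lemma rel2 : ePlus * eMinus - eMinus * ePlus = hOp := by
  apply leib_ext (leib_ePlus.mulcomm leib_eMinus) leib_hOp
  intro i
  fin_cases i <;>
    simp [hOp, ePlus, eMinus, D0, D1, D2, pdlm, smul_smul, Complex.I_mul_I, pderiv_mul, smul_sub,
      mul_sub, sub_mul, smul_add] <;>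
    (match_scalars <;> ring_nf <;> simp [Complex.I_sq])

lemma rel1' (p : MvPolynomial (Fin 3) ℂ) :
    hOp (eMinus p) = eMinus (hOp p) + (-2 : ℂ) • eMinus p := by
  have := LinearMap.congr_fun rel1 p
  simp only [LinearMap.sub_apply, Module.End.mul_apply, LinearMap.smul_apply] at this
  linear_combination (norm := module) this

lemma rel2' (p : MvPolynomial (Fin 3) ℂ) :
    ePlus (eMinus p) = eMinus (ePlus p) + hOp p := by
  have := LinearMap.congr_fun rel2 p
  simp only [LinearMap.sub_apply, Module.End.mul_apply] at this
  linear_combination (norm := module) this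

lemma Leib.pow {A} (hA : Leib A) {w : MvPolynomial (Fin 3) ℂ} {c : ℂ} (h : A w = c • w) :
    ∀ m : ℕ, A (w ^ m) = ((m : ℂ) * c) • w ^ m := by
  intro m
  induction m with
  | zero => simp [hA.one_eq_zero]
  | succ m ih =>
    rw [pow_succ, hA, ih, h]
    rw [smul_mul_assoc, mul_smul_comm, ← pow_succ, ← add_smul]
    push_cast
    ring_nf

lemma hOp_w : hOp (X 0 + Complex.I • X 1 : MvPolynomial (Fin 3) ℂ)
    = (2 : ℂ) • (X 0 + Complex.I • X 1) := by
  simp [hOp, D0, pdlm, smul_smul, smul_add, mul_smul_comm] <;>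
    (match_scalars <;> ring_nf <;> simp [Complex.I_sq])

lemma ePlus_w : ePlus (X 0 + Complex.I • X 1 : MvPolynomial (Fin 3) ℂ) = 0 := by
  simp [ePlus, D1, D2, pdlm, smul_smul, smul_add, Complex.I_mul_I] <;>
    (match_scalars <;> ring_nf <;> simp [Complex.I_sq])

lemma pvec_succ (n k : ℕ) : pvec n (k + 1) = eMinus (pvec n k) := by
  rw [pvec, pvec, pow_succ', Module.End.mul_apply]

lemma pvec_zero (n : ℕ) : pvec n 0 = (X 0 + Complex.I • X 1) ^ n := by
  rw [pvec, pow_zero, Module.End.one_apply]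

lemma hOp_pvec (n k : ℕ) : hOp (pvec n k) = ((2 * n : ℂ) - 2 * k) • pvec n k := by
  induction k with
  | zero =>
    rw [pvec_zero, leib_hOp.pow hOp_w n, ← pvec_zero]
    congr 1
    push_cast; ring
  | succ k ih =>
    rw [pvec_succ, rel1' (pvec n k), ih, map_smul, ← pvec_succ, ← add_smul]
    congr 1
    push_cast; ring

lemma ePlus_pvec_zero (n : ℕ) : ePlus (pvec n 0) = 0 := by
  have h0 : ePlus (X 0 + Complex.I • X 1 : MvPolynomial (Fin 3) ℂ)
      = (0 : ℂ) • (X 0 + Complex.I • X 1) := by rw [ePlus_w, zero_smul]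
  rw [pvec_zero, leib_ePlus.pow h0 n, mul_zero, zero_smul]

lemma ePlus_pvec_succ (n k : ℕ) :
    ePlus (pvec n (k + 1)) = (((k : ℂ) + 1) * (2 * n - k)) • pvec n k := by
  induction k with
  | zero =>
    rw [pvec_succ, rel2' (pvec n 0), ePlus_pvec_zero, map_zero, zero_add, hOp_pvec]
    congr 1
    push_cast; ring
  | succ k ih =>
    rw [pvec_succ, rel2' (pvec n (k + 1)), ih, map_smul, ← pvec_succ, hOp_pvec, ← add_smul]
    congr 1
    push_cast; ring

lemma ePlus_pvec (n m : ℕ) :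
    ePlus (pvec n m) = ((m : ℂ) * (2 * n + 1 - m)) • pvec n (m - 1) := by
  cases m with
  | zero => rw [ePlus_pvec_zero]; simp
  | succ k =>
    rw [ePlus_pvec_succ, Nat.add_sub_cancel]
    congr 1
    push_cast; ring


/-- The quadratic form `q* = Σ_k (−1)^{n+k} p_k p_{2n−k}` is annihilated by `h` and `e₊`. -/
theorem qstar_annihilated (n : ℕ) (hn : 1 ≤ n) :
    hOp (∑ k ∈ Finset.range (2 * n + 1), (-1 : ℂ) ^ (n + k) • (pvec n k * pvec n (2 * n - k))) = 0 ∧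
    ePlus (∑ k ∈ Finset.range (2 * n + 1), (-1 : ℂ) ^ (n + k) • (pvec n k * pvec n (2 * n - k))) = 0 := by
  constructor
  · rw [map_sum]
    apply Finset.sum_eq_zero
    intro k hk
    have hk' : k ≤ 2 * n := by
      have := Finset.mem_range.mp hk; omega
    rw [map_smul, leib_hOp (pvec n k) (pvec n (2 * n - k)), hOp_pvec, hOp_pvec,
      smul_mul_assoc, mul_smul_comm, ← add_smul]
    have hc : ((2 * n : ℂ) - 2 * k) + ((2 * n : ℂ) - 2 * ((2 * n - k : ℕ) : ℂ)) = 0 := by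
      rw [Nat.cast_sub hk']
      push_cast; ring
    rw [hc, zero_smul, smul_zero]
  · rw [map_sum]
    have expand : ∀ k : ℕ, ePlus (pvec n k * pvec n (2 * n - k)) =
        ((k : ℂ) * (2 * n + 1 - k)) • (pvec n (k - 1) * pvec n (2 * n - k))
          + (((2 * n - k : ℕ) : ℂ) * (2 * n + 1 - ((2 * n - k : ℕ) : ℂ)))
              • (pvec n k * pvec n (2 * n - k - 1)) := by
      intro k
      rw [leib_ePlus (pvec n k) (pvec n (2 * n - k)), ePlus_pvec, ePlus_pvec,
        smul_mul_assoc, mul_smul_comm]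
    have hsum : ∑ k ∈ Finset.range (2 * n + 1),
          ePlus ((-1 : ℂ) ^ (n + k) • (pvec n k * pvec n (2 * n - k)))
        = (∑ k ∈ Finset.range (2 * n + 1),
            ((-1 : ℂ) ^ (n + k) * ((k : ℂ) * (2 * n + 1 - k)))
              • (pvec n (k - 1) * pvec n (2 * n - k)))
          + ∑ k ∈ Finset.range (2 * n + 1),
            ((-1 : ℂ) ^ (n + k) * (((2 * n - k : ℕ) : ℂ) * (2 * n + 1 - ((2 * n - k : ℕ) : ℂ))))
              • (pvec n k * pvec n (2 * n - k - 1)) := by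
      rw [← Finset.sum_add_distrib]
      refine Finset.sum_congr rfl fun k hk => ?_
      rw [map_smul, expand k, smul_add, smul_smul, smul_smul]
    rw [hsum, Finset.sum_range_succ' _ (2 * n), Finset.sum_range_succ _ (2 * n)]
    simp only [Nat.cast_zero, zero_mul, mul_zero, zero_smul, add_zero, Nat.sub_self]
    rw [← Finset.sum_add_distrib]
    apply Finset.sum_eq_zero
    intro k hk
    have hk' : k < 2 * n := Finset.mem_range.mp hk
    have hidx : 2 * n - (k + 1) = 2 * n - k - 1 := by omega
    rw [hidx, Nat.add_sub_cancel, ← add_smul]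
    have hc : ((-1 : ℂ) ^ (n + (k + 1)) * (((k + 1 : ℕ) : ℂ) * (2 * n + 1 - ((k + 1 : ℕ) : ℂ))))
        + ((-1 : ℂ) ^ (n + k) * (((2 * n - k : ℕ) : ℂ) * (2 * n + 1 - ((2 * n - k : ℕ) : ℂ)))) = 0 := by
      rw [Nat.cast_sub hk'.le, show n + (k + 1) = (n + k) + 1 from rfl, pow_succ]
      push_cast; ring
    rw [hc, zero_smul]
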